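/- Dynamical description of the bifurcation sequences (Lemma 3.2). Let λ ∈ (0,1) be irrational. Then s'_n = Λ'_n for all n ≥ 0 and s''_n = Λ''_n for all n ≥ 0; in particular Λ_R = {s'_n : n ≥ 0} and Λ_L = {s''_n : n ≥ 0}. -/
import Mathlib


open Real Set
open scoped Classical

noncomputable section

/-- The interval map g_ℓ with middle interval (1, 1+ℓ) of fixed points:
g_ℓ(x) = x+λ on [0,1], x on (1,1+ℓ), x−1 on [1+ℓ, 1+λ]. -/
def gl (lam l x : ℝ) : ℝ :=
  if x ≤ 1 then x + lam else if x < 1 + l then x else x - 1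

/-- The interval exchange g(x) = x+λ on [0,1], x−1 on (1, 1+λ]. -/
def g0 (lam x : ℝ) : ℝ := if x ≤ 1 then x + lam else x - 1

/-- The set of positive times at which the g_ℓ-orbit of x visits [1, 1+ℓ]. -/
def hitSetI (lam l x : ℝ) : Set ℕ :=
  {n : ℕ | 0 < n ∧ (gl lam l)^[n] x ∈ Set.Icc 1 (1 + l)}

/-- The first hitting time n_ℓ(x) of x to [1, 1+ℓ] (as a natural number; 0 if
the orbit never hits). -/
def nhit (lam l x : ℝ) : ℕ := sInf (hitSetI lam l x)

/-- The first hitting time n_ℓ(x) of x to [1, 1+ℓ], with value ∞ ∈ ℕ∪{∞} if the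
orbit never hits. -/
def nhitE (lam l x : ℝ) : ℕ∞ := sInf ((fun n : ℕ => (n : ℕ∞)) '' hitSetI lam l x)

/-- The first hitting map r_ℓ(x) = g_ℓ^{n_ℓ(x)}(x). -/
def rmap (lam l x : ℝ) : ℝ := (gl lam l)^[nhit lam l x] x

/-- r'_ℓ(x) = r_ℓ(x) outside [1,1+ℓ] and x on [1,1+ℓ]. -/
def rmap' (lam l x : ℝ) : ℝ := if x ∈ Set.Icc 1 (1 + l) then x else rmap lam l x

/-- The left bifurcation set Λ_L (hitting times compared in ℕ∪{∞}). -/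
def LamL (lam : ℝ) : Set ℝ :=
  {l | 0 < l ∧ l ≤ lam ∧ ∀ l' : ℝ, 0 < l' → l' < l → nhitE lam l 1 < nhitE lam l' 1}

/-- The right bifurcation set Λ_R (hitting times compared in ℕ∪{∞}). -/
def LamR (lam : ℝ) : Set ℝ :=
  {l | 0 < l ∧ l ≤ lam ∧
    ∀ l' : ℝ, 0 < l' → l' < l → nhitE lam l (1 + l) < nhitE lam l' (1 + l')}
/-- The times k'_n: k'_0 = λ₁+1 and
k'_n = min{k ≥ 1 : g^{k'_{n−1}}(1) < g^k(1) < 1}. -/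
def kp (lam : ℝ) : ℕ → ℕ
  | 0 => Nat.floor (1 / lam) + 1
  | n + 1 =>
      sInf {k : ℕ | 1 ≤ k ∧ (g0 lam)^[kp lam n] 1 < (g0 lam)^[k] 1 ∧ (g0 lam)^[k] 1 < 1}

/-- The times k''_n: k''_1 = λ₁+2 and
k''_n = min{k ≥ 1 : 1 < g^k(1) < g^{k''_{n−1}}(1)} for n ≥ 2 (k''_0 is unused). -/
def kpp (lam : ℝ) : ℕ → ℕ
  | 0 => 0
  | 1 => Nat.floor (1 / lam) + 2
  | n + 2 =>
      sInf {k : ℕ | 1 ≤ k ∧ 1 < (g0 lam)^[k] 1 ∧ (g0 lam)^[k] 1 < (g0 lam)^[kpp lam (n + 1)] 1}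

/-- s'_n = 1 − g^{k'_n}(1). -/
def sp (lam : ℝ) (n : ℕ) : ℝ := 1 - (g0 lam)^[kp lam n] 1

/-- s''_0 = λ and s''_n = g^{k''_n}(1) − 1 for n ≥ 1. -/
def spp (lam : ℝ) : ℕ → ℝ
  | 0 => lam
  | n + 1 => (g0 lam)^[kpp lam (n + 1)] 1 - 1
/-! ### Auxiliary development -/

/-- The orbit of 1 under `g0`. -/
def aseq (lam : ℝ) (n : ℕ) : ℝ := (g0 lam)^[n] 1

lemma aseq_zero (lam : ℝ) : aseq lam 0 = 1 := rfl

lemma aseq_succ (lam : ℝ) (n : ℕ) : aseq lam (n + 1) = g0 lam (aseq lam n) := by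
  simp [aseq, Function.iterate_succ_apply']

lemma g0_mem_Ioc {lam : ℝ} (hlam0 : 0 < lam) (hlam1 : lam < 1) {x : ℝ}
    (hx : x ∈ Set.Ioc (0:ℝ) (1 + lam)) : g0 lam x ∈ Set.Ioc (0:ℝ) (1 + lam) := by
  rcases hx with ⟨hx0, hx1⟩
  unfold g0
  by_cases h : x ≤ 1 <;> simp only [h, if_pos, if_neg, not_false_iff] <;>
    exact ⟨by linarith, by linarith⟩

lemma aseq_mem_Ioc {lam : ℝ} (hlam0 : 0 < lam) (hlam1 : lam < 1) (n : ℕ) :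
    aseq lam n ∈ Set.Ioc (0:ℝ) (1 + lam) := by
  induction n with
  | zero => rw [aseq_zero]; exact ⟨one_pos, by linarith⟩
  | succ n ih => rw [aseq_succ]; exact g0_mem_Ioc hlam0 hlam1 ih

lemma g0_iter_rep (lam : ℝ) (x : ℝ) (n : ℕ) :
    ∃ m : ℤ, (g0 lam)^[n] x = x + n * lam + m * (1 + lam) := by
  induction n with
  | zero => exact ⟨0, by simp⟩
  | succ n ih =>
    obtain ⟨m, hm⟩ := ih
    rw [Function.iterate_succ_apply', hm]
    unfold g0
    by_cases h : x + n * lam + m * (1 + lam) ≤ 1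
    · refine ⟨m, ?_⟩
      simp only [h, if_pos]
      push_cast; ring
    · refine ⟨m - 1, ?_⟩
      simp only [h, if_neg, not_false_iff]
      push_cast; ring

lemma aseq_rep (lam : ℝ) (n : ℕ) :
    ∃ m : ℤ, aseq lam n = 1 + n * lam + m * (1 + lam) := g0_iter_rep lam 1 n

/-- Two points of `(0, 1+λ]` differing by an integer multiple of `1+λ` are equal. -/
lemma Ioc_unique {lam : ℝ} (hlam0 : 0 < lam) {u v : ℝ} (hu : u ∈ Set.Ioc (0:ℝ) (1 + lam))
    (hv : v ∈ Set.Ioc (0:ℝ) (1 + lam)) {c : ℤ} (h : u - v = c * (1 + lam)) : u = v := by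
  rcases hu with ⟨hu0, hu1⟩
  rcases hv with ⟨hv0, hv1⟩
  have hpos : (0:ℝ) < 1 + lam := by linarith
  have h1 : |u - v| < 1 + lam := abs_sub_lt_iff.mpr ⟨by linarith, by linarith⟩
  rw [h, abs_mul, abs_of_pos hpos] at h1
  have : |(c:ℝ)| < 1 := by
    nlinarith [abs_nonneg (c:ℝ)]
  have hc : c = 0 := by
    have : |(c:ℝ)| < 1 := this
    by_contra hc
    have : (1:ℝ) ≤ |(c:ℝ)| := by
      have := Int.one_le_abs (by omega : c ≠ 0)
      exact_mod_cast (by exact_mod_cast this : (1:ℤ) ≤ |c|)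
    linarith
  rw [hc] at h
  simpa using sub_eq_zero.mp (by simpa using h)

/-- Integer combinations: if `i + j * lam = 0` then `i = j = 0`. -/
lemma int_comb_eq_zero {lam : ℝ} (hirr : Irrational lam) {i j : ℤ}
    (h : (i:ℝ) + j * lam = 0) : i = 0 ∧ j = 0 := by
  by_cases hj : j = 0
  · subst hj; simp at h; exact ⟨by exact_mod_cast h, rfl⟩
  · exfalso
    refine hirr ⟨(-i : ℚ) / (j : ℚ), ?_⟩
    have hjne : (j:ℝ) ≠ 0 := Int.cast_ne_zero.mpr hj
    push_cast
    field_simp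
    linarith

lemma aseq_ne_one {lam : ℝ} (hirr : Irrational lam) {n : ℕ} (hn : 1 ≤ n) :
    aseq lam n ≠ 1 := by
  obtain ⟨m, hm⟩ := aseq_rep lam n
  intro h
  rw [h] at hm
  have : ((m:ℤ):ℝ) + (((n:ℤ) + m : ℤ):ℝ) * lam = 0 := by push_cast; linarith
  obtain ⟨h1, h2⟩ := int_comb_eq_zero hirr this
  omega

lemma aseq_inj {lam : ℝ} (hirr : Irrational lam) {i j : ℕ}
    (h : aseq lam i = aseq lam j) : i = j := by
  obtain ⟨mi, hi⟩ := aseq_rep lam i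
  obtain ⟨mj, hj⟩ := aseq_rep lam j
  rw [hi, hj] at h
  have : (((mi - mj : ℤ)):ℝ) + (((i:ℤ) - (j:ℤ) + mi - mj : ℤ):ℝ) * lam = 0 := by
    push_cast; linarith
  obtain ⟨h1, h2⟩ := int_comb_eq_zero hirr this
  omega

/-- Addition law for the orbit. -/
lemma aseq_add {lam : ℝ} (hlam0 : 0 < lam) (hlam1 : lam < 1) {i j : ℕ}
    (h : aseq lam i + aseq lam j - 1 ∈ Set.Ioc (0:ℝ) (1 + lam)) :
    aseq lam (i + j) = aseq lam i + aseq lam j - 1 := by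
  obtain ⟨mi, hi⟩ := aseq_rep lam i
  obtain ⟨mj, hj⟩ := aseq_rep lam j
  obtain ⟨m, hm⟩ := aseq_rep lam (i + j)
  have hd : aseq lam (i + j) - (aseq lam i + aseq lam j - 1) = ((m - mi - mj : ℤ):ℝ) * (1 + lam) := by
    rw [hi, hj, hm]; push_cast; ring
  exact Ioc_unique hlam0 (aseq_mem_Ioc hlam0 hlam1 (i + j)) h hd
/-! ### Floor facts and the beginning of the orbit -/

lemma lam1_pos {lam : ℝ} (hlam0 : 0 < lam) (hlam1 : lam < 1) :
    1 ≤ Nat.floor (1 / lam) := by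
  have : (1:ℝ) ≤ 1 / lam := by
    rw [le_div_iff₀ hlam0]; linarith
  exact Nat.one_le_floor_iff _ |>.mpr this

lemma lam1_mul_lt_one {lam : ℝ} (hlam0 : 0 < lam) (hlam1 : lam < 1) (hirr : Irrational lam) :
    (Nat.floor (1 / lam) : ℝ) * lam < 1 := by
  have h1 : (Nat.floor (1 / lam) : ℝ) ≤ 1 / lam := Nat.floor_le (by positivity)
  have h2 : (Nat.floor (1 / lam) : ℝ) * lam ≤ 1 := by
    rw [← le_div_iff₀ hlam0] at *; exact h1
  rcases lt_or_eq_of_le h2 with h | h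
  · exact h
  · exfalso
    have hne : (Nat.floor (1 / lam) : ℤ) ≠ 0 := by
      have := lam1_pos hlam0 hlam1; omega
    refine hirr ⟨1 / (Nat.floor (1 / lam) : ℚ), ?_⟩
    have hfne : ((Nat.floor (1 / lam) : ℕ):ℝ) ≠ 0 := by exact_mod_cast hne
    push_cast
    field_simp
    linarith
lemma one_lt_succ_lam1_mul {lam : ℝ} (hlam0 : 0 < lam) :
    1 < ((Nat.floor (1 / lam) : ℝ) + 1) * lam := by
  have h1 : 1 / lam < (Nat.floor (1 / lam) : ℝ) + 1 := Nat.lt_floor_add_one _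
  calc 1 = (1 / lam) * lam := by field_simp
    _ < ((Nat.floor (1 / lam) : ℝ) + 1) * lam := by
        exact mul_lt_mul_of_pos_right h1 hlam0

lemma aseq_one {lam : ℝ} : aseq lam 1 = 1 + lam := by
  rw [aseq_succ, aseq_zero]; unfold g0; simp

/-- `aseq (j+1) = j * lam` for `1 ≤ j ≤ λ₁`. -/
lemma aseq_base {lam : ℝ} (hlam0 : 0 < lam) (hlam1 : lam < 1) (hirr : Irrational lam) :
    ∀ j : ℕ, 1 ≤ j → j ≤ Nat.floor (1 / lam) → aseq lam (j + 1) = j * lam := by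
  intro j
  induction j with
  | zero => omega
  | succ j ih =>
    intro _ hj2
    rcases Nat.eq_zero_or_pos j with hj0 | hj0
    · subst hj0
      rw [aseq_succ, aseq_one]
      unfold g0
      simp only [add_le_iff_nonpos_right]
      rw [if_neg (by linarith)]
      push_cast; ring
    · have hj' : j ≤ Nat.floor (1 / lam) := by omega
      have hprev := ih hj0 hj'
      rw [aseq_succ, hprev]
      unfold g0
      have hle : (j:ℝ) * lam ≤ 1 := by
        have : (j:ℝ) * lam < 1 := by
          have hj3 : (j:ℝ) ≤ (Nat.floor (1 / lam) : ℝ) := by exact_mod_cast hj'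
          have := lam1_mul_lt_one hlam0 hlam1 hirr
          nlinarith
        linarith
      rw [if_pos hle]
      push_cast; ring

lemma aseq_lam1_succ {lam : ℝ} (hlam0 : 0 < lam) (hlam1 : lam < 1) (hirr : Irrational lam) :
    aseq lam (Nat.floor (1 / lam) + 1) = (Nat.floor (1 / lam) : ℝ) * lam :=
  aseq_base hlam0 hlam1 hirr _ (lam1_pos hlam0 hlam1) le_rfl

lemma aseq_lam1_succ2 {lam : ℝ} (hlam0 : 0 < lam) (hlam1 : lam < 1) (hirr : Irrational lam) :
    aseq lam (Nat.floor (1 / lam) + 2) = ((Nat.floor (1 / lam) : ℝ) + 1) * lam := by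
  have h := aseq_lam1_succ hlam0 hlam1 hirr
  have : Nat.floor (1 / lam) + 2 = (Nat.floor (1 / lam) + 1) + 1 := rfl
  rw [this, aseq_succ, h]
  unfold g0
  rw [if_pos (le_of_lt (lam1_mul_lt_one hlam0 hlam1 hirr))]
  ring

/-- Early orbit points (indices 2..λ₁+1) are below 1. -/
lemma aseq_early_lt_one {lam : ℝ} (hlam0 : 0 < lam) (hlam1 : lam < 1) (hirr : Irrational lam)
    {k : ℕ} (h2 : 2 ≤ k) (hk : k ≤ Nat.floor (1 / lam) + 1) : aseq lam k < 1 := by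
  obtain ⟨j, rfl⟩ : ∃ j, k = j + 1 := ⟨k - 1, by omega⟩
  rw [aseq_base hlam0 hlam1 hirr j (by omega) (by omega)]
  have hj : (j:ℝ) ≤ (Nat.floor (1 / lam) : ℝ) := by exact_mod_cast (by omega : j ≤ Nat.floor (1/lam))
  have := lam1_mul_lt_one hlam0 hlam1 hirr
  nlinarith
/-! ### Descent: arbitrarily close approaches to 1 from both sides -/

section Descent
variable {lam : ℝ}

lemma gap_ne (hlam0 : 0 < lam) (hlam1 : lam < 1) (hirr : Irrational lam) {i j : ℕ} (hi : 1 ≤ i) (hj : 1 ≤ j) (hai : aseq lam i < 1) (haj : 1 < aseq lam j)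
    (haj' : aseq lam j ≤ 1 + lam) :
    1 - aseq lam i ≠ aseq lam j - 1 := by
  intro h
  have hsum : aseq lam i + aseq lam j - 1 = 1 := by linarith
  have : aseq lam (i + j) = 1 := by
    rw [aseq_add hlam0 hlam1 (by rw [hsum]; exact ⟨one_pos, by linarith⟩)]
    exact hsum
  exact aseq_ne_one hirr (by omega) this

lemma step_below (hlam0 : 0 < lam) (hlam1 : lam < 1) {i j : ℕ} (haj' : aseq lam j ≤ 1 + lam) (hai : aseq lam i < 1) (hai0 : 0 < aseq lam i)
    (haj : 1 < aseq lam j) (h : aseq lam j - 1 < 1 - aseq lam i) :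
    aseq lam (i + j) = aseq lam i + aseq lam j - 1 ∧
      aseq lam i < aseq lam (i + j) ∧ aseq lam (i + j) < 1 := by
  have hmem : aseq lam i + aseq lam j - 1 ∈ Set.Ioc (0:ℝ) (1 + lam) :=
    ⟨by linarith, by linarith⟩
  have heq := aseq_add hlam0 hlam1 hmem
  exact ⟨heq, by rw [heq]; linarith, by rw [heq]; linarith⟩

lemma step_above (hlam0 : 0 < lam) (hlam1 : lam < 1) {i j : ℕ} (hai : aseq lam i < 1) (hai0 : 0 < aseq lam i)
    (haj : 1 < aseq lam j) (haj' : aseq lam j ≤ 1 + lam)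
    (h : 1 - aseq lam i < aseq lam j - 1) :
    aseq lam (i + j) = aseq lam i + aseq lam j - 1 ∧
      1 < aseq lam (i + j) ∧ aseq lam (i + j) < aseq lam j := by
  have hmem : aseq lam i + aseq lam j - 1 ∈ Set.Ioc (0:ℝ) (1 + lam) :=
    ⟨by linarith, by linarith⟩
  have heq := aseq_add hlam0 hlam1 hmem
  exact ⟨heq, by rw [heq]; linarith, by rw [heq]; linarith⟩

/-- Reduce the below-gap beneath the above-gap, recording total decrease. -/
lemma descend_below (hlam0 : 0 < lam) (hlam1 : lam < 1) (hirr : Irrational lam) : ∀ N : ℕ, ∀ i j : ℕ, 1 ≤ i → 1 ≤ j →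
    aseq lam i < 1 → 1 < aseq lam j →
    aseq lam j - 1 < 1 - aseq lam i →
    1 - aseq lam i ≤ (N + 1) * (aseq lam j - 1) →
    ∃ i', 1 ≤ i' ∧ aseq lam i' < 1 ∧ 1 - aseq lam i' < aseq lam j - 1 ∧
      1 - aseq lam i' ≤ (1 - aseq lam i) - (aseq lam j - 1) := by
  intro N
  induction N with
  | zero =>
    intro i j hi hj hai haj h hbd
    exfalso; push_cast at hbd; linarith
  | succ N ih =>
    intro i j hi hj hai haj h hbd
    have hai0 : 0 < aseq lam i := (aseq_mem_Ioc hlam0 hlam1 i).1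
    obtain ⟨heq, hlt, hlt1⟩ := step_below hlam0 hlam1 (aseq_mem_Ioc hlam0 hlam1 j).2 hai hai0 haj h
    have hij : 1 ≤ i + j := by omega
    have hnew : 1 - aseq lam (i + j) = (1 - aseq lam i) - (aseq lam j - 1) := by
      rw [heq]; ring
    rcases lt_trichotomy (aseq lam j - 1) (1 - aseq lam (i + j)) with h' | h' | h'
    · -- continue descending
      have hbd' : 1 - aseq lam (i + j) ≤ (N + 1) * (aseq lam j - 1) := by
        rw [hnew]; push_cast at hbd ⊢; linarith
      obtain ⟨i', h1, h2, h3, h4⟩ := ih (i + j) j hij hj hlt1 haj h' hbd'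
      exact ⟨i', h1, h2, h3, by rw [hnew] at h4; linarith⟩
    · exfalso
      exact gap_ne hlam0 hlam1 hirr hij hj hlt1 haj (aseq_mem_Ioc hlam0 hlam1 j).2 h'.symm
    · exact ⟨i + j, hij, hlt1, h', by rw [hnew]⟩

/-- Reduce the above-gap beneath the below-gap, recording total decrease. -/
lemma descend_above (hlam0 : 0 < lam) (hlam1 : lam < 1) (hirr : Irrational lam) : ∀ N : ℕ, ∀ i j : ℕ, 1 ≤ i → 1 ≤ j →
    aseq lam i < 1 → 1 < aseq lam j →
    1 - aseq lam i < aseq lam j - 1 →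
    aseq lam j - 1 ≤ (N + 1) * (1 - aseq lam i) →
    ∃ j', 1 ≤ j' ∧ 1 < aseq lam j' ∧ aseq lam j' - 1 < 1 - aseq lam i ∧
      aseq lam j' - 1 ≤ (aseq lam j - 1) - (1 - aseq lam i) := by
  intro N
  induction N with
  | zero =>
    intro i j hi hj hai haj h hbd
    exfalso; push_cast at hbd; linarith
  | succ N ih =>
    intro i j hi hj hai haj h hbd
    have hai0 : 0 < aseq lam i := (aseq_mem_Ioc hlam0 hlam1 i).1
    obtain ⟨heq, hgt1, hltj⟩ := step_above hlam0 hlam1 hai hai0 haj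
      (aseq_mem_Ioc hlam0 hlam1 j).2 h
    have hij : 1 ≤ i + j := by omega
    have hnew : aseq lam (i + j) - 1 = (aseq lam j - 1) - (1 - aseq lam i) := by
      rw [heq]; ring
    rcases lt_trichotomy (1 - aseq lam i) (aseq lam (i + j) - 1) with h' | h' | h'
    · have hbd' : aseq lam (i + j) - 1 ≤ (N + 1) * (1 - aseq lam i) := by
        rw [hnew]; push_cast at hbd ⊢; linarith
      obtain ⟨j', h1, h2, h3, h4⟩ := ih i (i + j) hi hij hai hgt1 h' hbd'
      exact ⟨j', h1, h2, h3, by rw [hnew] at h4; linarith⟩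
    · exfalso
      exact gap_ne hlam0 hlam1 hirr hi hij hai hgt1 (aseq_mem_Ioc hlam0 hlam1 (i + j)).2 h'
    · exact ⟨i + j, hij, hgt1, h', by rw [hnew]⟩

/-- One round of the subtractive algorithm halves the larger gap. -/
lemma round_halve (hlam0 : 0 < lam) (hlam1 : lam < 1) (hirr : Irrational lam) {i j : ℕ} (hi : 1 ≤ i) (hj : 1 ≤ j)
    (hai : aseq lam i < 1) (haj : 1 < aseq lam j) :
    ∃ i' j', 1 ≤ i' ∧ 1 ≤ j' ∧ aseq lam i' < 1 ∧ 1 < aseq lam j' ∧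
      2 * (1 - aseq lam i') < max (1 - aseq lam i) (aseq lam j - 1) ∧
      2 * (aseq lam j' - 1) < max (1 - aseq lam i) (aseq lam j - 1) := by
  have hai0 : 0 < aseq lam i := (aseq_mem_Ioc hlam0 hlam1 i).1
  have haj' : aseq lam j ≤ 1 + lam := (aseq_mem_Ioc hlam0 hlam1 j).2
  have hne := gap_ne hlam0 hlam1 hirr hi hj hai haj haj'
  rcases lt_or_gt_of_ne hne with hcase | hcase
  · -- below-gap < above-gap : first descend above, then below
    obtain ⟨N, hN⟩ := exists_nat_gt ((aseq lam j - 1) / (1 - aseq lam i))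
    have hbd : aseq lam j - 1 ≤ (N + 1) * (1 - aseq lam i) := by
      rw [div_lt_iff₀ (by linarith)] at hN
      nlinarith
    obtain ⟨j₁, hj₁, haj₁, hj₁lt, hj₁dec⟩ :=
      descend_above hlam0 hlam1 hirr N i j hi hj hai haj hcase hbd
    -- now above-gap(j₁) < below-gap(i)
    obtain ⟨N', hN'⟩ := exists_nat_gt ((1 - aseq lam i) / (aseq lam j₁ - 1))
    have hbd' : 1 - aseq lam i ≤ (N' + 1) * (aseq lam j₁ - 1) := by
      rw [div_lt_iff₀ (by linarith)] at hN'
      nlinarith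
    obtain ⟨i₁, hi₁, hai₁, hi₁lt, hi₁dec⟩ :=
      descend_below hlam0 hlam1 hirr N' i j₁ hi hj₁ hai haj₁ hj₁lt hbd'
    refine ⟨i₁, j₁, hi₁, hj₁, hai₁, haj₁, ?_, ?_⟩
    · have : aseq lam j₁ - 1 < 1 - aseq lam i := hj₁lt
      have h2 : 2 * (aseq lam j₁ - 1) < aseq lam j - 1 := by linarith
      have := le_max_right (1 - aseq lam i) (aseq lam j - 1)
      linarith
    · have h2 : 2 * (aseq lam j₁ - 1) < aseq lam j - 1 := by linarith
      have := le_max_right (1 - aseq lam i) (aseq lam j - 1)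
      linarith
  · -- above-gap < below-gap : first descend below, then above
    obtain ⟨N, hN⟩ := exists_nat_gt ((1 - aseq lam i) / (aseq lam j - 1))
    have hbd : 1 - aseq lam i ≤ (N + 1) * (aseq lam j - 1) := by
      rw [div_lt_iff₀ (by linarith)] at hN
      nlinarith
    obtain ⟨i₁, hi₁, hai₁, hi₁lt, hi₁dec⟩ :=
      descend_below hlam0 hlam1 hirr N i j hi hj hai haj hcase hbd
    obtain ⟨N', hN'⟩ := exists_nat_gt ((aseq lam j - 1) / (1 - aseq lam i₁))
    have hbd' : aseq lam j - 1 ≤ (N' + 1) * (1 - aseq lam i₁) := by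
      rw [div_lt_iff₀ (by linarith)] at hN'
      nlinarith
    obtain ⟨j₁, hj₁, haj₁, hj₁lt, hj₁dec⟩ :=
      descend_above hlam0 hlam1 hirr N' i₁ j hi₁ hj hai₁ haj hi₁lt hbd'
    refine ⟨i₁, j₁, hi₁, hj₁, hai₁, haj₁, ?_, ?_⟩
    · have h2 : 2 * (1 - aseq lam i₁) < 1 - aseq lam i := by linarith
      have := le_max_left (1 - aseq lam i) (aseq lam j - 1)
      linarith
    · have h2 : 2 * (1 - aseq lam i₁) < 1 - aseq lam i := by linarith
      have := le_max_left (1 - aseq lam i) (aseq lam j - 1)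
      linarith

lemma small_gaps (hlam0 : 0 < lam) (hlam1 : lam < 1) (hirr : Irrational lam) : ∀ n : ℕ, ∃ i j : ℕ, 1 ≤ i ∧ 1 ≤ j ∧ aseq lam i < 1 ∧ 1 < aseq lam j ∧
    1 - aseq lam i < lam / 2 ^ n ∧ aseq lam j - 1 < lam / 2 ^ n := by
  intro n
  induction n with
  | zero =>
    have e1 := aseq_lam1_succ hlam0 hlam1 hirr
    have e2 := aseq_lam1_succ2 hlam0 hlam1 hirr
    have f1 := lam1_mul_lt_one hlam0 hlam1 hirr
    have f2 := one_lt_succ_lam1_mul (lam := lam) hlam0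
    refine ⟨Nat.floor (1 / lam) + 1, Nat.floor (1 / lam) + 2, by omega, by omega, ?_, ?_, ?_, ?_⟩
    · rw [e1]; exact f1
    · rw [e2]; exact f2
    · rw [e1]; simp only [pow_zero, div_one]; nlinarith
    · rw [e2]; simp only [pow_zero, div_one]; nlinarith
  | succ n ih =>
    obtain ⟨i, j, hi, hj, hai, haj, hsi, hsj⟩ := ih
    obtain ⟨i', j', hi', hj', hai', haj', h1, h2⟩ := round_halve hlam0 hlam1 hirr hi hj hai haj
    have hmax : max (1 - aseq lam i) (aseq lam j - 1) < lam / 2 ^ n := by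
      exact max_lt hsi hsj
    refine ⟨i', j', hi', hj', hai', haj', ?_, ?_⟩
    · have : lam / 2 ^ (n + 1) = lam / 2 ^ n / 2 := by ring
      rw [this]; linarith
    · have : lam / 2 ^ (n + 1) = lam / 2 ^ n / 2 := by ring
      rw [this]; linarith

lemma close_below (hlam0 : 0 < lam) (hlam1 : lam < 1) (hirr : Irrational lam) (ε : ℝ) (hε : 0 < ε) :
    ∃ k, 1 ≤ k ∧ aseq lam k < 1 ∧ 1 - aseq lam k < ε := by
  obtain ⟨n, hn⟩ := pow_unbounded_of_one_lt (lam / ε) (by norm_num : (1:ℝ) < 2)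
  obtain ⟨i, j, hi, hj, hai, haj, hsi, hsj⟩ := small_gaps hlam0 hlam1 hirr n
  refine ⟨i, hi, hai, lt_of_lt_of_le hsi ?_⟩
  rw [div_le_iff₀ (by positivity)]
  rw [div_lt_iff₀ hε] at hn
  linarith

lemma close_above (hlam0 : 0 < lam) (hlam1 : lam < 1) (hirr : Irrational lam) (ε : ℝ) (hε : 0 < ε) :
    ∃ k, 1 ≤ k ∧ 1 < aseq lam k ∧ aseq lam k - 1 < ε := by
  obtain ⟨n, hn⟩ := pow_unbounded_of_one_lt (lam / ε) (by norm_num : (1:ℝ) < 2)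
  obtain ⟨i, j, hi, hj, hai, haj, hsi, hsj⟩ := small_gaps hlam0 hlam1 hirr n
  refine ⟨j, hj, haj, lt_of_lt_of_le hsj ?_⟩
  rw [div_le_iff₀ (by positivity)]
  rw [div_lt_iff₀ hε] at hn
  linarith

end Descent
/-! ### Records -/

/-- Below-record: closest approach to 1 from below among all earlier positive times. -/
def isRecB (lam : ℝ) (m : ℕ) : Prop :=
  1 ≤ m ∧ aseq lam m < 1 ∧
    ∀ k, 1 ≤ k → k < m → aseq lam k < 1 → aseq lam k < aseq lam m

/-- Above-record: closest approach to 1 from above among all earlier positive times. -/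
def isRecA (lam : ℝ) (m : ℕ) : Prop :=
  1 ≤ m ∧ 1 < aseq lam m ∧
    ∀ k, 1 ≤ k → k < m → 1 < aseq lam k → aseq lam m < aseq lam k

section Records
variable {lam : ℝ}

lemma kp_zero (lam : ℝ) : kp lam 0 = Nat.floor (1 / lam) + 1 := rfl

lemma kp_succ_def (lam : ℝ) (n : ℕ) :
    kp lam (n + 1) =
      sInf {k : ℕ | 1 ≤ k ∧ aseq lam (kp lam n) < aseq lam k ∧ aseq lam k < 1} := rfl

lemma kpp_one (lam : ℝ) : kpp lam 1 = Nat.floor (1 / lam) + 2 := rfl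

lemma kpp_succ_def (lam : ℝ) (n : ℕ) :
    kpp lam (n + 2) =
      sInf {k : ℕ | 1 ≤ k ∧ 1 < aseq lam k ∧ aseq lam k < aseq lam (kpp lam (n + 1))} := rfl

lemma isRecB_kp_zero (hlam0 : 0 < lam) (hlam1 : lam < 1) (hirr : Irrational lam) :
    isRecB lam (kp lam 0) ∧ 1 - aseq lam (kp lam 0) < lam := by
  have e1 := aseq_lam1_succ hlam0 hlam1 hirr
  have f1 := lam1_mul_lt_one hlam0 hlam1 hirr
  have f2 := one_lt_succ_lam1_mul (lam := lam) hlam0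
  rw [kp_zero]
  refine ⟨⟨by omega, by rw [e1]; exact f1, ?_⟩, by rw [e1]; nlinarith⟩
  intro k hk1 hk2 hk3
  rcases Nat.eq_or_lt_of_le hk1 with h1 | h1
  · exfalso; rw [← h1, aseq_one] at hk3; linarith
  · -- 2 ≤ k ≤ lam1
    obtain ⟨j, rfl⟩ : ∃ j, k = j + 1 := ⟨k - 1, by omega⟩
    rw [aseq_base hlam0 hlam1 hirr j (by omega) (by omega), e1]
    have hj : (j:ℝ) ≤ (Nat.floor (1/lam) : ℝ) - 1 := by
      have : (j:ℝ) + 1 ≤ (Nat.floor (1/lam) : ℝ) := by exact_mod_cast (by omega : j + 1 ≤ Nat.floor (1/lam))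
      linarith
    nlinarith

/-- Main induction for `kp`. -/
lemma kp_main (hlam0 : 0 < lam) (hlam1 : lam < 1) (hirr : Irrational lam) :
    ∀ n, isRecB lam (kp lam n) ∧ 1 - aseq lam (kp lam n) < lam ∧
      aseq lam (kp lam n) < aseq lam (kp lam (n + 1)) ∧ kp lam n < kp lam (n + 1) := by
  have key : ∀ n, (isRecB lam (kp lam n) ∧ 1 - aseq lam (kp lam n) < lam) →
      (aseq lam (kp lam n) < aseq lam (kp lam (n + 1)) ∧ kp lam (n + 1) < 1 → False) ∨ True := by
    exact fun n _ => Or.inr trivial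
  -- the real work
  have step : ∀ n, isRecB lam (kp lam n) → 1 - aseq lam (kp lam n) < lam →
      (isRecB lam (kp lam (n + 1)) ∧ 1 - aseq lam (kp lam (n + 1)) < lam ∧
        aseq lam (kp lam n) < aseq lam (kp lam (n + 1)) ∧ kp lam n < kp lam (n + 1)) := by
    intro n hrec hlt
    obtain ⟨hm1, hm2, hm3⟩ := hrec
    set S : Set ℕ := {k : ℕ | 1 ≤ k ∧ aseq lam (kp lam n) < aseq lam k ∧ aseq lam k < 1} with hS
    have hne : S.Nonempty := by
      obtain ⟨k, hk1, hk2, hk3⟩ := close_below hlam0 hlam1 hirr (1 - aseq lam (kp lam n)) (by linarith)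
      exact ⟨k, hk1, by linarith, hk2⟩
    have hmem : kp lam (n + 1) ∈ S := by
      rw [kp_succ_def]; exact Nat.sInf_mem hne
    obtain ⟨hk1, hk2, hk3⟩ := hmem
    have hlb : ∀ k, k < kp lam (n + 1) → k ∉ S := by
      intro k hk
      rw [kp_succ_def] at hk
      exact Nat.notMem_of_lt_sInf hk
    have hgt : kp lam n < kp lam (n + 1) := by
      rcases lt_trichotomy (kp lam (n + 1)) (kp lam n) with h | h | h
      · exfalso; have := hm3 _ hk1 h hk3; linarith
      · exfalso; rw [h] at hk2; linarith
      · exact h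
    refine ⟨⟨hk1, hk3, ?_⟩, by linarith, hk2, hgt⟩
    intro k h1 h2 h3
    have := hlb k h2
    simp only [hS, Set.mem_setOf_eq, not_and, not_lt] at this
    have hle : aseq lam k ≤ aseq lam (kp lam n) := by
      by_contra hcon
      push_neg at hcon
      exact absurd h3 (by have := this h1 hcon; linarith)
    linarith
  intro n
  induction n with
  | zero =>
    obtain ⟨h1, h2⟩ := isRecB_kp_zero hlam0 hlam1 hirr
    exact ⟨h1, h2, (step 0 h1 h2).2.2⟩
  | succ n ih =>
    obtain ⟨h1, h2, _, _⟩ := ih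
    obtain ⟨g1, g2, g3, g4⟩ := step n h1 h2
    exact ⟨g1, g2, (step (n + 1) g1 g2).2.2⟩

lemma isRecA_kpp_one (hlam0 : 0 < lam) (hlam1 : lam < 1) (hirr : Irrational lam) :
    isRecA lam (kpp lam 1) ∧ aseq lam (kpp lam 1) ≤ ((Nat.floor (1/lam) : ℝ) + 1) * lam := by
  have e2 := aseq_lam1_succ2 hlam0 hlam1 hirr
  have f1 := lam1_mul_lt_one hlam0 hlam1 hirr
  have f2 := one_lt_succ_lam1_mul (lam := lam) hlam0
  rw [kpp_one]
  refine ⟨⟨by omega, by rw [e2]; exact f2, ?_⟩, by rw [e2]⟩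
  intro k hk1 hk2 hk3
  rcases Nat.eq_or_lt_of_le hk1 with h1 | h1
  · rw [← h1, aseq_one]; rw [e2]; nlinarith
  · exfalso
    have : aseq lam k < 1 := aseq_early_lt_one hlam0 hlam1 hirr h1 (by omega)
    linarith

/-- Main induction for `kpp` (indices shifted by one). -/
lemma kpp_main (hlam0 : 0 < lam) (hlam1 : lam < 1) (hirr : Irrational lam) :
    ∀ n, isRecA lam (kpp lam (n + 1)) ∧
      aseq lam (kpp lam (n + 1)) ≤ ((Nat.floor (1/lam) : ℝ) + 1) * lam ∧
      aseq lam (kpp lam (n + 2)) < aseq lam (kpp lam (n + 1)) ∧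
      kpp lam (n + 1) < kpp lam (n + 2) := by
  have step : ∀ n, isRecA lam (kpp lam (n + 1)) →
      aseq lam (kpp lam (n + 1)) ≤ ((Nat.floor (1/lam) : ℝ) + 1) * lam →
      (isRecA lam (kpp lam (n + 2)) ∧
        aseq lam (kpp lam (n + 2)) ≤ ((Nat.floor (1/lam) : ℝ) + 1) * lam ∧
        aseq lam (kpp lam (n + 2)) < aseq lam (kpp lam (n + 1)) ∧
        kpp lam (n + 1) < kpp lam (n + 2)) := by
    intro n hrec hbd
    obtain ⟨hm1, hm2, hm3⟩ := hrec
    set S : Set ℕ := {k : ℕ | 1 ≤ k ∧ 1 < aseq lam k ∧ aseq lam k < aseq lam (kpp lam (n + 1))} with hS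
    have hne : S.Nonempty := by
      obtain ⟨k, hk1, hk2, hk3⟩ := close_above hlam0 hlam1 hirr (aseq lam (kpp lam (n + 1)) - 1) (by linarith)
      exact ⟨k, hk1, hk2, by linarith⟩
    have hmem : kpp lam (n + 2) ∈ S := by
      rw [kpp_succ_def]; exact Nat.sInf_mem hne
    obtain ⟨hk1, hk2, hk3⟩ := hmem
    have hlb : ∀ k, k < kpp lam (n + 2) → k ∉ S := by
      intro k hk
      rw [kpp_succ_def] at hk
      exact Nat.notMem_of_lt_sInf hk
    have hgt : kpp lam (n + 1) < kpp lam (n + 2) := by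
      rcases lt_trichotomy (kpp lam (n + 2)) (kpp lam (n + 1)) with h | h | h
      · exfalso; have := hm3 _ hk1 h hk2; linarith
      · exfalso; rw [h] at hk3; linarith
      · exact h
    refine ⟨⟨hk1, hk2, ?_⟩, by linarith, hk3, hgt⟩
    intro k h1 h2 h3
    have := hlb k h2
    simp only [hS, Set.mem_setOf_eq, not_and, not_lt] at this
    have hge : aseq lam (kpp lam (n + 1)) ≤ aseq lam k := this h1 h3
    linarith
  intro n
  induction n with
  | zero =>
    obtain ⟨h1, h2⟩ := isRecA_kpp_one hlam0 hlam1 hirr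
    exact ⟨h1, h2, (step 0 h1 h2).2.2⟩
  | succ n ih =>
    obtain ⟨h1, h2, _, _⟩ := ih
    obtain ⟨g1, g2, g3, g4⟩ := step n h1 h2
    exact ⟨g1, g2, (step (n + 1) g1 g2).2.2⟩

lemma kp_strictMono (hlam0 : 0 < lam) (hlam1 : lam < 1) (hirr : Irrational lam) :
    StrictMono (kp lam) :=
  strictMono_nat_of_lt_succ fun n => (kp_main hlam0 hlam1 hirr n).2.2.2

lemma aseq_kp_strictMono (hlam0 : 0 < lam) (hlam1 : lam < 1) (hirr : Irrational lam) :
    StrictMono (fun n => aseq lam (kp lam n)) :=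
  strictMono_nat_of_lt_succ fun n => (kp_main hlam0 hlam1 hirr n).2.2.1

lemma aseq_kpp_strictAnti (hlam0 : 0 < lam) (hlam1 : lam < 1) (hirr : Irrational lam) :
    StrictAnti (fun n => aseq lam (kpp lam (n + 1))) :=
  strictAnti_nat_of_succ_lt fun n => (kpp_main hlam0 hlam1 hirr n).2.2.1

end Records
/-! ### Hitting times in terms of the `g0`-orbit -/

section Hitting
variable {lam : ℝ}

/-- The `g0`-orbit visit sets. -/
def TR (lam l : ℝ) : Set ℕ := {n : ℕ | 0 < n ∧ aseq lam n ∈ Set.Icc (1 - l) 1}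
def TL (lam l : ℝ) : Set ℕ := {n : ℕ | 0 < n ∧ aseq lam n ∈ Set.Icc 1 (1 + l)}

lemma gl_eq_g0 {l x : ℝ} (hx : x ∉ Set.Ioo (1:ℝ) (1 + l)) : gl lam l x = g0 lam x := by
  unfold gl g0
  by_cases h : x ≤ 1
  · simp [h]
  · have hx1 : ¬ x < 1 + l := fun hc => hx ⟨lt_of_not_ge h, hc⟩
    simp [h, hx1]

lemma gl_iter_eq_g0 {l x : ℝ} :
    ∀ n : ℕ, (∀ k, k < n → (g0 lam)^[k] x ∉ Set.Ioo (1:ℝ) (1 + l)) →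
      (gl lam l)^[n] x = (g0 lam)^[n] x := by
  intro n
  induction n with
  | zero => intro _; rfl
  | succ n ih =>
    intro h
    rw [Function.iterate_succ_apply', Function.iterate_succ_apply',
      ih (fun k hk => h k (by omega)), gl_eq_g0 (h n (by omega))]

/-- `sInf` of a coerced image, given a member which is a lower bound. -/
lemma sInf_image_eq {S : Set ℕ} {m : ℕ} (hm : m ∈ S) (hlb : ∀ n ∈ S, m ≤ n) :
    sInf ((fun n : ℕ => (n : ℕ∞)) '' S) = (m : ℕ∞) := by
  apply le_antisymm
  · exact sInf_le ⟨m, hm, rfl⟩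
  · refine le_sInf ?_
    rintro b ⟨n, hn, rfl⟩
    simp only []
    exact_mod_cast hlb n hn

lemma sInf_image_empty : sInf ((fun n : ℕ => (n : ℕ∞)) '' (∅ : Set ℕ)) = ⊤ := by
  simp

lemma lt_sInf_image {S : Set ℕ} {m : ℕ} (h : ∀ n ∈ S, m < n) :
    (m : ℕ∞) < sInf ((fun n : ℕ => (n : ℕ∞)) '' S) := by
  rcases Set.eq_empty_or_nonempty S with rfl | hne
  · simp
  · have : ((m + 1 : ℕ) : ℕ∞) ≤ sInf ((fun n : ℕ => (n : ℕ∞)) '' S) := by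
      refine le_sInf ?_
      rintro b ⟨n, hn, rfl⟩
      simp only []
      exact_mod_cast h n hn
    calc (m : ℕ∞) < ((m + 1 : ℕ) : ℕ∞) := by exact_mod_cast Nat.lt_succ_self m
      _ ≤ _ := this

lemma sInf_image_ne_top {S : Set ℕ} (h : sInf ((fun n : ℕ => (n : ℕ∞)) '' S) ≠ ⊤) :
    S.Nonempty := by
  rcases Set.eq_empty_or_nonempty S with rfl | hne
  · simp at h
  · exact hne

/-- Transfer `nhitE` to the `g0`-orbit hitting set. -/
lemma nhitE_eq_g0 {l x : ℝ} (hx : x ∉ Set.Ioo (1:ℝ) (1 + l)) :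
    nhitE lam l x =
      sInf ((fun n : ℕ => (n : ℕ∞)) '' {n : ℕ | 0 < n ∧ (g0 lam)^[n] x ∈ Set.Icc 1 (1 + l)}) := by
  set S0 : Set ℕ := {n : ℕ | 0 < n ∧ (g0 lam)^[n] x ∈ Set.Icc 1 (1 + l)} with hS0
  rcases Set.eq_empty_or_nonempty S0 with hemp | hne
  · have havoid : ∀ k, (g0 lam)^[k] x ∉ Set.Ioo (1:ℝ) (1 + l) := by
      intro k
      rcases Nat.eq_zero_or_pos k with rfl | hk
      · exact hx
      · intro hmem
        have : k ∈ S0 := ⟨hk, Set.Ioo_subset_Icc_self hmem⟩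
        rw [hemp] at this; exact this
    have : hitSetI lam l x = ∅ := by
      ext n
      simp only [hitSetI, Set.mem_setOf_eq, Set.mem_empty_iff_false, iff_false, not_and]
      intro hn hmem
      rw [gl_iter_eq_g0 n (fun k _ => havoid k)] at hmem
      have : n ∈ S0 := ⟨hn, hmem⟩
      rw [hemp] at this; exact this
    rw [nhitE, this, hemp]
  · set m := sInf S0 with hm
    have hmem : m ∈ S0 := Nat.sInf_mem hne
    have heqit : ∀ n, n ≤ m → (gl lam l)^[n] x = (g0 lam)^[n] x := by
      intro n hn
      apply gl_iter_eq_g0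
      intro k hk
      rcases Nat.eq_zero_or_pos k with rfl | hk0
      · exact hx
      · intro hcon
        have : k ∈ S0 := ⟨hk0, Set.Ioo_subset_Icc_self hcon⟩
        have := Nat.sInf_le this
        omega
    have hmem' : m ∈ hitSetI lam l x := by
      refine ⟨hmem.1, ?_⟩
      rw [heqit m le_rfl]; exact hmem.2
    have hlb' : ∀ n ∈ hitSetI lam l x, m ≤ n := by
      intro n hn
      by_contra hcon
      push_neg at hcon
      have : (gl lam l)^[n] x = (g0 lam)^[n] x := heqit n (by omega)
      have : n ∈ S0 := ⟨hn.1, by rw [← this]; exact hn.2⟩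
      have := Nat.sInf_le this
      omega
    rw [nhitE, sInf_image_eq hmem' hlb', sInf_image_eq hmem (fun n hn => Nat.sInf_le hn)]

lemma nhitE_L (l : ℝ) :
    nhitE lam l 1 = sInf ((fun n : ℕ => (n : ℕ∞)) '' TL lam l) := by
  rw [nhitE_eq_g0 (by simp)]
  rfl

/-- The shift lemma for the orbit of `1 + l`. -/
lemma shift_iff (hlam0 : 0 < lam) (hlam1 : lam < 1) {l : ℝ} (hl0 : 0 < l) (hl : l ≤ lam)
    (n : ℕ) : (g0 lam)^[n] (1 + l) ∈ Set.Icc (1:ℝ) (1 + l) ↔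
      aseq lam n ∈ Set.Icc (1 - l) 1 := by
  have hb_mem : ∀ k : ℕ, (g0 lam)^[k] (1 + l) ∈ Set.Ioc (0:ℝ) (1 + lam) := by
    intro k
    induction k with
    | zero =>
      rw [Function.iterate_zero_apply]
      exact ⟨by linarith, by linarith⟩
    | succ k ih => rw [Function.iterate_succ_apply']; exact g0_mem_Ioc hlam0 hlam1 ih
  obtain ⟨mb, hmb⟩ := g0_iter_rep lam (1 + l) n
  obtain ⟨ma, hma⟩ := aseq_rep lam n
  have hdiff : ∀ c : ℤ, (g0 lam)^[n] (1 + l) - (aseq lam n + l) = ((mb - ma : ℤ):ℝ) * (1 + lam) := by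
    intro _
    rw [hmb, hma]; push_cast; ring
  constructor
  · intro h
    have h1 : (g0 lam)^[n] (1 + l) - l ∈ Set.Ioc (0:ℝ) (1 + lam) := by
      rcases h with ⟨ha, hb⟩
      exact ⟨by linarith, by linarith⟩
    have heq : (g0 lam)^[n] (1 + l) - l = aseq lam n := by
      refine Ioc_unique hlam0 h1 (aseq_mem_Ioc hlam0 hlam1 n) (c := mb - ma) ?_
      have := hdiff 0
      linarith
    rcases h with ⟨ha, hb⟩
    rw [← heq]
    exact ⟨by linarith, by linarith⟩
  · intro h
    have h1 : aseq lam n + l ∈ Set.Ioc (0:ℝ) (1 + lam) := by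
      rcases h with ⟨ha, hb⟩
      exact ⟨by linarith, by linarith⟩
    have heq : (g0 lam)^[n] (1 + l) = aseq lam n + l := by
      refine Ioc_unique hlam0 (hb_mem n) h1 (c := mb - ma) (hdiff 0)
    rcases h with ⟨ha, hb⟩
    rw [heq]
    exact ⟨by linarith, by linarith⟩

lemma nhitE_R (hlam0 : 0 < lam) (hlam1 : lam < 1) {l : ℝ} (hl0 : 0 < l) (hl : l ≤ lam) :
    nhitE lam l (1 + l) = sInf ((fun n : ℕ => (n : ℕ∞)) '' TR lam l) := by
  rw [nhitE_eq_g0 (by simp)]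
  congr 1
  ext n
  simp only [Set.mem_image, Set.mem_setOf_eq, TR]
  constructor
  · rintro ⟨k, ⟨hk0, hk1⟩, rfl⟩
    exact ⟨k, ⟨hk0, (shift_iff hlam0 hlam1 hl0 hl k).mp hk1⟩, rfl⟩
  · rintro ⟨k, ⟨hk0, hk1⟩, rfl⟩
    exact ⟨k, ⟨hk0, (shift_iff hlam0 hlam1 hl0 hl k).mpr hk1⟩, rfl⟩

end Hitting
/-! ### The main set equalities -/

section Main
variable {lam : ℝ}

lemma sp_def' (lam : ℝ) (n : ℕ) : sp lam n = 1 - aseq lam (kp lam n) := rfl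
lemma spp_def' (lam : ℝ) (n : ℕ) : spp lam (n + 1) = aseq lam (kpp lam (n + 1)) - 1 := rfl
lemma spp_zero (lam : ℝ) : spp lam 0 = lam := rfl

lemma sp_mem_LamR (hlam0 : 0 < lam) (hlam1 : lam < 1) (hirr : Irrational lam) (n : ℕ) :
    sp lam n ∈ LamR lam := by
  obtain ⟨⟨hK1, hA1, hrec⟩, hbd, _, _⟩ := kp_main hlam0 hlam1 hirr n
  set K := kp lam n with hKdef
  set A := aseq lam K with hAdef
  have hA0 : 0 < A := (aseq_mem_Ioc hlam0 hlam1 K).1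
  have hl : sp lam n = 1 - A := rfl
  have hl0 : 0 < sp lam n := by rw [hl]; linarith
  have hllam : sp lam n ≤ lam := by rw [hl]; linarith
  refine ⟨hl0, hllam, ?_⟩
  intro l' hl'0 hl'lt
  have hval : nhitE lam (sp lam n) (1 + sp lam n) = (K : ℕ∞) := by
    rw [nhitE_R hlam0 hlam1 hl0 hllam]
    apply sInf_image_eq
    · exact ⟨by omega, by rw [hl]; exact Set.mem_Icc.mpr ⟨by linarith, le_of_lt hA1⟩⟩
    · rintro k ⟨hk0, hk1, hk2⟩
      by_contra hcon
      push_neg at hcon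
      have hklt : aseq lam k < 1 := lt_of_le_of_ne hk2 (aseq_ne_one hirr (by omega))
      have := hrec k (by omega) hcon hklt
      rw [hl] at hk1
      linarith
  rw [hval, nhitE_R hlam0 hlam1 hl'0 (by linarith)]
  apply lt_sInf_image
  rintro k ⟨hk0, hk1, hk2⟩
  by_contra hcon
  push_neg at hcon
  have hklt : aseq lam k < 1 := lt_of_le_of_ne hk2 (aseq_ne_one hirr (by omega))
  rcases lt_or_eq_of_le hcon with h | h
  · have := hrec k (by omega) h hklt
    rw [hl] at hl'lt
    linarith
  · rw [h] at hk1
    rw [hl] at hl'lt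
    rw [← hAdef] at hk1
    linarith

lemma LamR_subset (hlam0 : 0 < lam) (hlam1 : lam < 1) (hirr : Irrational lam) :
    LamR lam ⊆ Set.range (sp lam) := by
  rintro l ⟨hl0, hllam, hcomp⟩
  have hfin : nhitE lam l (1 + l) ≠ ⊤ :=
    ne_top_of_lt (hcomp (l / 2) (by linarith) (by linarith))
  rw [nhitE_R hlam0 hlam1 hl0 hllam] at hfin
  have hne : (TR lam l).Nonempty := sInf_image_ne_top hfin
  set m := sInf (TR lam l) with hmdef
  have hm : m ∈ TR lam l := Nat.sInf_mem hne
  obtain ⟨hm0, hm1, hm2⟩ := hm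
  have hmlt : aseq lam m < 1 := lt_of_le_of_ne hm2 (aseq_ne_one hirr (by omega))
  have hval : nhitE lam l (1 + l) = (m : ℕ∞) := by
    rw [nhitE_R hlam0 hlam1 hl0 hllam]
    exact sInf_image_eq (Nat.sInf_mem hne) (fun k hk => Nat.sInf_le hk)
  -- the value of l
  have heq : aseq lam m = 1 - l := by
    by_contra hcon
    have hgt : 1 - l < aseq lam m := lt_of_le_of_ne hm1 (Ne.symm hcon)
    set l' := 1 - aseq lam m with hl'def
    have hl'0 : 0 < l' := by simp only [hl'def]; linarith
    have hl'lt : l' < l := by simp only [hl'def]; linarith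
    have h1 := hcomp l' hl'0 hl'lt
    rw [hval, nhitE_R hlam0 hlam1 hl'0 (by linarith)] at h1
    have h2 : sInf ((fun n : ℕ => (n : ℕ∞)) '' TR lam l') ≤ (m : ℕ∞) := by
      apply sInf_le
      exact ⟨m, ⟨hm0, Set.mem_Icc.mpr ⟨by rw [hl'def]; linarith, hm2⟩⟩, rfl⟩
    exact absurd (lt_of_lt_of_le h1 h2) (lt_irrefl _)
  -- m is a below-record
  have hrec : isRecB lam m := by
    refine ⟨by omega, hmlt, ?_⟩
    intro k hk1 hk2 hk3
    by_contra hcon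
    push_neg at hcon
    have : k ∈ TR lam l := ⟨by omega, by rw [heq] at hcon; exact hcon, le_of_lt hk3⟩
    have := Nat.sInf_le this
    omega
  -- m is at least kp 0
  have hm_ge : kp lam 0 ≤ m := by
    by_contra hcon
    push_neg at hcon
    rw [kp_zero] at hcon
    have hm1' : 1 ≤ m := by omega
    rcases Nat.eq_or_lt_of_le hm1' with h1 | h1
    · rw [← h1, aseq_one] at hmlt; linarith
    · -- 2 ≤ m ≤ lam1
      obtain ⟨j, hj⟩ : ∃ j, m = j + 1 := ⟨m - 1, by omega⟩
      have hbase := aseq_base hlam0 hlam1 hirr j (by omega) (by omega)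
      rw [hj, hbase] at heq
      -- (j : ℝ) * lam = 1 - l with l ≤ lam gives (j+1) * lam ≥ 1
      have hjle : j ≤ Nat.floor (1 / lam) - 1 := by omega
      have hjlt : (j:ℝ) ≤ (Nat.floor (1 / lam) : ℝ) - 1 := by
        have : (j:ℝ) + 1 ≤ (Nat.floor (1 / lam) : ℝ) := by
          exact_mod_cast (by omega : j + 1 ≤ Nat.floor (1 / lam))
        linarith
      have := lam1_mul_lt_one hlam0 hlam1 hirr
      nlinarith
  -- find the index
  have hmono := kp_strictMono hlam0 hlam1 hirr
  set N := Nat.findGreatest (fun t => kp lam t ≤ m) m with hNdef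
  have hPN : kp lam N ≤ m := by
    rw [hNdef]
    exact Nat.findGreatest_spec (P := fun t => kp lam t ≤ m) (Nat.zero_le m) hm_ge
  rcases eq_or_lt_of_le hPN with h | h
  · exact ⟨N, by rw [sp_def', h, heq]; ring⟩
  · exfalso
    have hNm : N + 1 ≤ m := by
      have : N ≤ kp lam N := hmono.le_apply
      omega
    have hng : ¬ (kp lam (N + 1) ≤ m) := by
      rw [hNdef]
      exact Nat.findGreatest_is_greatest (P := fun t => kp lam t ≤ m) (by rw [← hNdef]; omega) hNm
    -- but m belongs to the defining set of kp (N+1)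
    obtain ⟨⟨_, hAN1, _⟩, _, _, _⟩ := kp_main hlam0 hlam1 hirr N
    have hmem : m ∈ {k : ℕ | 1 ≤ k ∧ aseq lam (kp lam N) < aseq lam k ∧ aseq lam k < 1} :=
      ⟨by omega, hrec.2.2 (kp lam N) (by omega) h hAN1, hmlt⟩
    have : kp lam (N + 1) ≤ m := by
      rw [kp_succ_def]
      exact Nat.sInf_le hmem
    exact hng this

lemma LamR_eq (hlam0 : 0 < lam) (hlam1 : lam < 1) (hirr : Irrational lam) :
    LamR lam = Set.range (sp lam) := by
  apply Set.eq_of_subset_of_subset (LamR_subset hlam0 hlam1 hirr)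
  rintro l ⟨n, rfl⟩
  exact sp_mem_LamR hlam0 hlam1 hirr n
lemma kpp_ge (hlam0 : 0 < lam) (hlam1 : lam < 1) (hirr : Irrational lam) :
    ∀ n : ℕ, n + 1 ≤ kpp lam (n + 1) := by
  intro n
  induction n with
  | zero => rw [kpp_one]; omega
  | succ n ih =>
    have := (kpp_main hlam0 hlam1 hirr n).2.2.2
    have e : kpp lam (n + 1 + 1) = kpp lam (n + 2) := rfl
    omega

lemma spp_zero_mem (hlam0 : 0 < lam) (hlam1 : lam < 1) (hirr : Irrational lam) :
    spp lam 0 ∈ LamL lam := by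
  rw [spp_zero]
  refine ⟨hlam0, le_rfl, ?_⟩
  intro l' hl'0 hl'lt
  have hval : nhitE lam lam 1 = (1 : ℕ∞) := by
    rw [nhitE_L]
    have h1 : (1 : ℕ) ∈ TL lam lam := by
      refine ⟨by omega, ?_⟩
      rw [aseq_one]
      exact Set.mem_Icc.mpr ⟨by linarith, le_rfl⟩
    have := sInf_image_eq h1 (fun k hk => hk.1)
    exact_mod_cast this
  rw [hval, nhitE_L]
  have : ((1:ℕ) : ℕ∞) < sInf ((fun n : ℕ => (n : ℕ∞)) '' TL lam l') := by
    apply lt_sInf_image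
    rintro k ⟨hk0, hk1, hk2⟩
    by_contra hcon
    push_neg at hcon
    have hk1' : k = 1 := by omega
    rw [hk1', aseq_one] at hk2
    linarith
  exact_mod_cast this

lemma spp_succ_mem (hlam0 : 0 < lam) (hlam1 : lam < 1) (hirr : Irrational lam) (n : ℕ) :
    spp lam (n + 1) ∈ LamL lam := by
  obtain ⟨⟨hK1, hA1, hrec⟩, hbd, _, _⟩ := kpp_main hlam0 hlam1 hirr n
  set K := kpp lam (n + 1) with hKdef
  set A := aseq lam K with hAdef
  have hl : spp lam (n + 1) = A - 1 := rfl
  have hl0 : 0 < spp lam (n + 1) := by rw [hl]; linarith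
  have hAbd : A < 1 + lam := by
    have := lam1_mul_lt_one hlam0 hlam1 hirr
    calc A ≤ ((Nat.floor (1/lam) : ℝ) + 1) * lam := hbd
      _ < 1 + lam := by nlinarith
  have hllam : spp lam (n + 1) ≤ lam := by rw [hl]; linarith
  refine ⟨hl0, hllam, ?_⟩
  intro l' hl'0 hl'lt
  have hval : nhitE lam (spp lam (n + 1)) 1 = (K : ℕ∞) := by
    rw [nhitE_L]
    apply sInf_image_eq
    · exact ⟨by omega, by rw [hl]; exact Set.mem_Icc.mpr ⟨by linarith, by linarith⟩⟩
    · rintro k ⟨hk0, hk1, hk2⟩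
      by_contra hcon
      push_neg at hcon
      have hkgt : 1 < aseq lam k := lt_of_le_of_ne hk1 (Ne.symm (aseq_ne_one hirr (by omega)))
      have := hrec k (by omega) hcon hkgt
      rw [hl] at hk2
      linarith
  rw [hval, nhitE_L]
  apply lt_sInf_image
  rintro k ⟨hk0, hk1, hk2⟩
  by_contra hcon
  push_neg at hcon
  have hkgt : 1 < aseq lam k := lt_of_le_of_ne hk1 (Ne.symm (aseq_ne_one hirr (by omega)))
  rcases lt_or_eq_of_le hcon with h | h
  · have := hrec k (by omega) h hkgt
    rw [hl] at hl'lt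
    linarith
  · rw [h, ← hAdef] at hk2
    rw [hl] at hl'lt
    linarith

lemma LamL_subset (hlam0 : 0 < lam) (hlam1 : lam < 1) (hirr : Irrational lam) :
    LamL lam ⊆ Set.range (spp lam) := by
  rintro l ⟨hl0, hllam, hcomp⟩
  have hfin : nhitE lam l 1 ≠ ⊤ :=
    ne_top_of_lt (hcomp (l / 2) (by linarith) (by linarith))
  rw [nhitE_L] at hfin
  have hne : (TL lam l).Nonempty := sInf_image_ne_top hfin
  set m := sInf (TL lam l) with hmdef
  have hm : m ∈ TL lam l := Nat.sInf_mem hne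
  obtain ⟨hm0, hm1, hm2⟩ := hm
  have hmgt : 1 < aseq lam m := lt_of_le_of_ne hm1 (Ne.symm (aseq_ne_one hirr (by omega)))
  have hval : nhitE lam l 1 = (m : ℕ∞) := by
    rw [nhitE_L]
    exact sInf_image_eq (Nat.sInf_mem hne) (fun k hk => Nat.sInf_le hk)
  have heq : aseq lam m = 1 + l := by
    by_contra hcon
    have hlt : aseq lam m < 1 + l := lt_of_le_of_ne hm2 hcon
    set l' := aseq lam m - 1 with hl'def
    have hl'0 : 0 < l' := by rw [hl'def]; linarith
    have hl'lt : l' < l := by rw [hl'def]; linarith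
    have h1 := hcomp l' hl'0 hl'lt
    rw [hval, nhitE_L] at h1
    have h2 : sInf ((fun n : ℕ => (n : ℕ∞)) '' TL lam l') ≤ (m : ℕ∞) := by
      apply sInf_le
      exact ⟨m, ⟨hm0, Set.mem_Icc.mpr ⟨le_of_lt hmgt, by rw [hl'def]; linarith⟩⟩, rfl⟩
    exact absurd (lt_of_lt_of_le h1 h2) (lt_irrefl _)
  -- m is an above-record
  have hrec : isRecA lam m := by
    refine ⟨by omega, hmgt, ?_⟩
    intro k hk1 hk2 hk3
    by_contra hcon
    push_neg at hcon
    have : k ∈ TL lam l := ⟨by omega, Set.mem_Icc.mpr ⟨le_of_lt hk3, by rw [← heq]; exact hcon⟩⟩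
    have := Nat.sInf_le this
    omega
  rcases Nat.eq_or_lt_of_le (by omega : 1 ≤ m) with h1 | h1
  · -- m = 1 : l = lam
    refine ⟨0, ?_⟩
    rw [spp_zero]
    rw [← h1, aseq_one] at heq
    linarith
  · -- m ≥ 2 : first show kpp 1 ≤ m
    have hm_ge : kpp lam 1 ≤ m := by
      by_contra hcon
      push_neg at hcon
      rw [kpp_one] at hcon
      have : aseq lam m < 1 := aseq_early_lt_one hlam0 hlam1 hirr h1 (by omega)
      linarith
    set N := Nat.findGreatest (fun t => kpp lam (t + 1) ≤ m) m with hNdef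
    have hPN : kpp lam (N + 1) ≤ m := by
      rw [hNdef]
      exact Nat.findGreatest_spec (P := fun t => kpp lam (t + 1) ≤ m) (Nat.zero_le m) hm_ge
    rcases eq_or_lt_of_le hPN with h | h
    · exact ⟨N + 1, by rw [spp_def', h, heq]; ring⟩
    · exfalso
      have hNm : N + 1 ≤ m := by
        have := kpp_ge hlam0 hlam1 hirr N
        omega
      have hng : ¬ (kpp lam (N + 2) ≤ m) := by
        rw [hNdef]
        exact Nat.findGreatest_is_greatest (P := fun t => kpp lam (t + 1) ≤ m)
          (by rw [← hNdef]; omega) hNm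
      obtain ⟨⟨_, hAN1, _⟩, _, _, _⟩ := kpp_main hlam0 hlam1 hirr N
      have hmem : m ∈ {k : ℕ | 1 ≤ k ∧ 1 < aseq lam k ∧ aseq lam k < aseq lam (kpp lam (N + 1))} :=
        ⟨by omega, hmgt, hrec.2.2 (kpp lam (N + 1)) (by omega) h hAN1⟩
      have : kpp lam (N + 2) ≤ m := by
        rw [kpp_succ_def]
        exact Nat.sInf_le hmem
      exact hng this

lemma LamL_eq (hlam0 : 0 < lam) (hlam1 : lam < 1) (hirr : Irrational lam) :
    LamL lam = Set.range (spp lam) := by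
  apply Set.eq_of_subset_of_subset (LamL_subset hlam0 hlam1 hirr)
  rintro l ⟨n, rfl⟩
  cases n with
  | zero => exact spp_zero_mem hlam0 hlam1 hirr
  | succ n => exact spp_succ_mem hlam0 hlam1 hirr n
lemma sp_strictAnti (hlam0 : 0 < lam) (hlam1 : lam < 1) (hirr : Irrational lam) :
    StrictAnti (sp lam) := by
  apply strictAnti_nat_of_succ_lt
  intro n
  have := (kp_main hlam0 hlam1 hirr n).2.2.1
  rw [sp_def', sp_def']
  linarith

lemma spp_strictAnti (hlam0 : 0 < lam) (hlam1 : lam < 1) (hirr : Irrational lam) :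
    StrictAnti (spp lam) := by
  apply strictAnti_nat_of_succ_lt
  intro n
  cases n with
  | zero =>
    rw [spp_zero, spp_def']
    have hbd := (kpp_main hlam0 hlam1 hirr 0).2.1
    have := lam1_mul_lt_one hlam0 hlam1 hirr
    nlinarith
  | succ n =>
    have := (kpp_main hlam0 hlam1 hirr n).2.2.1
    rw [spp_def', spp_def']
    have e : kpp lam (n + 1 + 1) = kpp lam (n + 2) := rfl
    rw [e]
    linarith

/-- Uniqueness of strictly decreasing enumerations. -/
lemma strictAnti_range_unique {f g : ℕ → ℝ} (hf : StrictAnti f) (hg : StrictAnti g)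
    (h : Set.range f = Set.range g) : ∀ n, f n = g n := by
  intro n
  induction n using Nat.strong_induction_on with
  | _ n ih =>
    have h1 : f n ≤ g n := by
      obtain ⟨m, hm⟩ : f n ∈ Set.range g := h ▸ Set.mem_range_self n
      rcases lt_or_ge m n with hmn | hmn
      · exfalso
        have : g m = f m := (ih m hmn).symm
        rw [this] at hm
        exact absurd (hf.injective hm.symm) (by omega)
      · calc f n = g m := hm.symm
          _ ≤ g n := hg.antitone hmn
    have h2 : g n ≤ f n := by
      obtain ⟨m, hm⟩ : g n ∈ Set.range f := h.symm ▸ Set.mem_range_self n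
      rcases lt_or_ge m n with hmn | hmn
      · exfalso
        have : f m = g m := ih m hmn
        rw [this] at hm
        exact absurd (hg.injective hm.symm) (by omega)
      · calc g n = f m := hm.symm
          _ ≤ f n := hf.antitone hmn
    linarith

end Main

/-- **Lemma 3.2 (dynamical description of the bifurcation sequences).** For
irrational λ ∈ (0,1): s'_n = Λ'_n and s''_n = Λ''_n for all n, where Λ' and Λ''
are the strictly decreasing enumerations of Λ_R and Λ_L; in particular
Λ_R = {s'_n : n ≥ 0} and Λ_L = {s''_n : n ≥ 0}. -/
theorem bifurcation_sequences_dynamical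
    (lam : ℝ) (hlam0 : 0 < lam) (hlam1 : lam < 1) (hirr : Irrational lam) :
    (∀ L' : ℕ → ℝ, StrictAnti L' → Set.range L' = LamR lam →
      ∀ n : ℕ, sp lam n = L' n) ∧
    (∀ L'' : ℕ → ℝ, StrictAnti L'' → Set.range L'' = LamL lam →
      ∀ n : ℕ, spp lam n = L'' n) ∧
    LamR lam = Set.range (sp lam) ∧
    LamL lam = Set.range (spp lam) := by
  have hR := LamR_eq hlam0 hlam1 hirr
  have hL := LamL_eq hlam0 hlam1 hirr
  refine ⟨?_, ?_, hR, hL⟩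
  · intro L' hL' hrange n
    exact strictAnti_range_unique (sp_strictAnti hlam0 hlam1 hirr) hL'
      (by rw [hrange, hR]) n
  · intro L'' hL'' hrange n
    exact strictAnti_range_unique (spp_strictAnti hlam0 hlam1 hirr) hL''
      (by rw [hrange, hL]) n

end
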